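/- arXiv:2203.15877 — 2 statements merged into one kernel-verified Lean document; each statement's English description precedes it below -/
import Mathlib

section
/- The optimal quantum CHSH strategy wins with probability cos²(π/8): let θ_A(0) = π/4, θ_A(1) = 0, θ_B(0) = π/8, θ_B(1) = 3π/8, and let w_{θ,0} = u_θ, w_{θ,1} = u_θ^⊥. Then (1/4) · Σ_{q1,q2∈{0,1}} Σ_{(a1,a2)∈{0,1}², a1 XOR a2 = q1 AND q2} |⟨ w_{θ_A(q1),a1} ⊗ w_{θ_B(q2),a2}, ψ ⟩|² = cos²(π/8), where ψ is the EPR pair. -/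
/-- The measurement basis vector at angle `θ` with outcome `0`:
`u_θ = cos θ · e₀ + sin θ · e₁`. -/
noncomputable def basisVec (θ : ℝ) : Bool → ℂ :=
  fun b => if b then (Real.sin θ : ℂ) else (Real.cos θ : ℂ)

/-- The measurement basis vector at angle `θ` with outcome `1`:
`u_θ^⊥ = −sin θ · e₀ + cos θ · e₁`. -/
noncomputable def basisVecPerp (θ : ℝ) : Bool → ℂ :=
  fun b => if b then (Real.cos θ : ℂ) else (-(Real.sin θ) : ℂ)

/-- `w_{θ,a}`: the basis vector at angle `θ` with outcome `a`. -/
noncomputable def w (θ : ℝ) (a : Bool) : Bool → ℂ :=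
  if a then basisVecPerp θ else basisVec θ

/-- Tensor product of two qubit vectors: `(u ⊗ v)(i,j) = uᵢ · vⱼ`. -/
def tensor (u v : Bool → ℂ) : Bool × Bool → ℂ :=
  fun p => u p.1 * v p.2

/-- The EPR pair `ψ = (e₀⊗e₀ + e₁⊗e₁)/√2`. -/
noncomputable def eprPair : Bool × Bool → ℂ :=
  fun p => if p.1 = p.2 then ((1 / Real.sqrt 2 : ℝ) : ℂ) else 0

/-- The Hermitian inner product on `ℂ² ⊗ ℂ² ≅ ℂ⁴`. -/
noncomputable def hInner (u v : Bool × Bool → ℂ) : ℂ :=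
  ∑ p : Bool × Bool, (starRingEnd ℂ) (u p) * v p

/-- Player A's measurement angle: `θ_A(0) = π/4`, `θ_A(1) = 0`. -/
noncomputable def thetaA (q : Bool) : ℝ := if q then 0 else Real.pi / 4

/-- Player B's measurement angle: `θ_B(0) = π/8`, `θ_B(1) = 3π/8`. -/
noncomputable def thetaB (q : Bool) : ℝ :=
  if q then 3 * Real.pi / 8 else Real.pi / 8

/-! For real measurement vectors `u`, `v`, the overlap `⟨u ⊗ v, ψ⟩` is the dot product
`u · v` over `√2`. Hence measuring `ψ` at angles `α`, `β` yields equal outcomes with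
probability `cos² (α - β)` and different outcomes with probability `sin² (α - β)`. The query
`(1, 1)` is won on different outcomes at `θ_A - θ_B = -3π/8`, every other query on equal
outcomes at `θ_A - θ_B = ±π/8`, so each query is won with probability `cos² (π/8)`. -/

lemma hInner_tensor_eprPair (u v : Bool → ℂ) :
    hInner (tensor u v) eprPair =
      starRingEnd ℂ (u false * v false + u true * v true) / Real.sqrt 2 := by
  simp only [hInner, tensor, eprPair, Fintype.sum_prod_type, Fintype.sum_bool,
    Bool.false_eq_true, Bool.true_eq_false, reduceIte, mul_zero, add_zero, zero_add, map_add,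
    map_mul]
  push_cast
  ring

lemma w_dot_w (α β : ℝ) (a b : Bool) :
    w α a false * w β b false + w α a true * w β b true =
      ((if xor a b then (if a then -1 else 1) * Real.sin (α - β) else Real.cos (α - β) : ℝ) :
        ℂ) := by
  cases a <;> cases b <;>
  · simp only [w, basisVec, basisVecPerp, Real.sin_sub, Real.cos_sub, Bool.false_eq_true,
      reduceIte, Bool.xor_false, Bool.xor_true, Bool.not_false, Bool.not_true]
    push_cast
    ring

lemma norm_sq_hInner_w_tensor_eprPair (α β : ℝ) (a b : Bool) :
    ‖hInner (tensor (w α a) (w β b)) eprPair‖ ^ 2 =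
      (if xor a b then Real.sin (α - β) else Real.cos (α - β)) ^ 2 / 2 := by
  rw [hInner_tensor_eprPair, w_dot_w, norm_div, Complex.norm_conj, Complex.norm_real,
    Complex.norm_real, Real.norm_eq_abs, Real.norm_of_nonneg (Real.sqrt_nonneg 2), div_pow,
    sq_abs, Real.sq_sqrt zero_le_two]
  split_ifs <;> ring

lemma sum_norm_sq_hInner_w_tensor_eprPair_xor_eq (α β : ℝ) (c : Bool) :
    ∑ a ∈ Finset.univ.filter (fun a : Bool × Bool => xor a.1 a.2 = c),
        ‖hInner (tensor (w α a.1) (w β a.2)) eprPair‖ ^ 2 =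
      (if c then Real.sin (α - β) else Real.cos (α - β)) ^ 2 := by
  have hcard : (Finset.univ.filter (fun a : Bool × Bool => xor a.1 a.2 = c)).card = 2 := by
    cases c <;> decide
  rw [Finset.sum_congr rfl fun a ha => by
      rw [norm_sq_hInner_w_tensor_eprPair, (Finset.mem_filter.1 ha).2],
    Finset.sum_const, hcard, nsmul_eq_mul]
  ring

/-- The optimal quantum CHSH strategy wins with probability `cos²(π/8)`. -/
theorem chsh_quantum_strategy_value :
    (1 / 4 : ℝ) *
      ∑ q : Bool × Bool,
        ∑ a ∈ Finset.univ.filter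
            (fun a : Bool × Bool => xor a.1 a.2 = (q.1 && q.2)),
          ‖hInner (tensor (w (thetaA q.1) a.1) (w (thetaB q.2) a.2)) eprPair‖ ^ 2 =
    Real.cos (Real.pi / 8) ^ 2 := by
  simp only [sum_norm_sq_hInner_w_tensor_eprPair_xor_eq, Fintype.sum_prod_type, Fintype.sum_bool,
    thetaA, thetaB, Bool.and_self, Bool.and_false, Bool.false_and, reduceIte, Bool.false_eq_true]
  have h₁ : Real.pi / 4 - Real.pi / 8 = Real.pi / 8 := by ring
  have h₂ : Real.pi / 4 - 3 * Real.pi / 8 = -(Real.pi / 8) := by ring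
  have h₃ : 0 - 3 * Real.pi / 8 = Real.pi / 8 - Real.pi / 2 := by ring
  rw [h₁, h₂, h₃, zero_sub, Real.cos_neg, Real.sin_sub_pi_div_two, neg_sq]
  ring
end

section
/- Encrypted-CNOT phase-correction identity: let ℓ ≥ 0, let u₀, u₁ ∈ (ℤ/2)^{ℓ+1} with first coordinates μ₀, μ₁ respectively, set s = μ₀ + μ₁ ∈ ℤ/2, let d ∈ (ℤ/2)^{ℓ+1}, set u_a = u₀ for a = 0 and u₁ for a = 1, and let α : {0,1}² → ℂ. Then Σ_{a,b∈{0,1}} (−1)^{d·u_a} · α(a,b) · ((I⊗X^{μ₀}) · CNOT^s)(e_a ⊗ e_b) = (−1)^{d·u₀} · ( (Z^{d·(u₀+u₁)} ⊗ X^{μ₀}) · CNOT^s )( Σ_{a,b∈{0,1}} α(a,b) · e_a ⊗ e_b ), where d·u denotes the mod-2 inner product Σᵢ dᵢuᵢ ∈ ℤ/2 and (−1)^c for c ∈ ℤ/2 means 1 if c = 0 and −1 if c = 1. -/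
open Matrix
open scoped Kronecker

/-- The Pauli `X` gate: `X = [[0,1],[1,0]]`. -/
def PX : Matrix Bool Bool ℂ := fun i j => if i = j then 0 else 1

/-- The Pauli `Z` gate: `Z = [[1,0],[0,−1]]`. -/
def PZ : Matrix Bool Bool ℂ := Matrix.diagonal (fun b => if b then -1 else 1)

/-- The two-qubit CNOT gate (control first qubit, target second):
`CNOT (e_a ⊗ e_b) = e_a ⊗ e_{b⊕a}`. -/
def CNOT : Matrix (Bool × Bool) (Bool × Bool) ℂ :=
  fun i j => if i = (j.1, xor j.2 j.1) then 1 else 0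

/-- The product basis vector `e_a ⊗ e_b` of `ℂ² ⊗ ℂ²`. -/
def ket2 (a b : Bool) : Bool × Bool → ℂ :=
  fun p => if p = (a, b) then 1 else 0

/-- The mod-2 inner product `d·u = Σᵢ dᵢuᵢ ∈ ℤ/2`. -/
def dotp {n : ℕ} (d u : Fin n → ZMod 2) : ZMod 2 := ∑ i, d i * u i

/-- The sign `(−1)^c` for `c ∈ ℤ/2`: `1` if `c = 0` and `−1` if `c = 1`. -/
def sign (c : ZMod 2) : ℂ := if c = 0 then 1 else -1

lemma zmod2_cases (c : ZMod 2) : c = 0 ∨ c = 1 := by revert c; decide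

lemma sign_add (x y : ZMod 2) : sign (x + y) = sign x * sign y := by
  rcases zmod2_cases x with hx | hx <;> rcases zmod2_cases y with hy | hy <;>
    norm_num [hx, hy, sign, show (1+1:ZMod 2)=0 by decide]

lemma dotp_add {n : ℕ} (d u v : Fin n → ZMod 2) :
    dotp d (fun i => u i + v i) = dotp d u + dotp d v := by
  simp [dotp, mul_add, Finset.sum_add_distrib]

lemma mulVec_ket2 (M : Matrix (Bool × Bool) (Bool × Bool) ℂ) (a b : Bool) :
    M.mulVec (ket2 a b) = fun p => M p (a, b) := by
  funext p
  simp [Matrix.mulVec, dotProduct, ket2, mul_ite]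

lemma cnot_ket2 (a b : Bool) : CNOT.mulVec (ket2 a b) = ket2 a (xor b a) := by
  rw [mulVec_ket2]; funext p; simp [CNOT, ket2]

lemma key (c : ZMod 2) (A : Matrix Bool Bool ℂ) (a b : Bool) :
    ((if c = 1 then PZ else 1) ⊗ₖ A).mulVec (ket2 a b) =
      sign (if a then c else 0) • ((1 : Matrix Bool Bool ℂ) ⊗ₖ A).mulVec (ket2 a b) := by
  rcases zmod2_cases c with hc | hc <;>
    · rw [mulVec_ket2, mulVec_ket2]
      funext p
      rcases p with ⟨i, j⟩
      rcases a <;> rcases i <;>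
        simp [hc, sign, PZ, Matrix.diagonal, Matrix.one_apply,
          Matrix.kroneckerMap_apply]

/-- Encrypted-CNOT phase-correction identity (Step 5 of the encrypted CNOT
operation in Mahadev's scheme): after Hadamarding and measuring the claw register
with outcome `d`, the residual two-qubit state equals, up to global phase
`(−1)^{d·u₀}`, the Pauli correction `Z^{d·(u₀+u₁)} ⊗ X^{μ₀}` applied to `CNOT^s`
of the original state, where `μ₀ = u₀(0)`, `μ₁ = u₁(0)` and `s = μ₀ + μ₁`. -/
theorem encrypted_cnot_phase_correction
    (ℓ : ℕ) (u₀ u₁ : Fin (ℓ + 1) → ZMod 2) (d : Fin (ℓ + 1) → ZMod 2)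
    (α : Bool × Bool → ℂ) :
    (∑ a : Bool, ∑ b : Bool,
        sign (dotp d (if a then u₁ else u₀)) •
          (α (a, b) •
            ((((1 : Matrix Bool Bool ℂ) ⊗ₖ (if u₀ 0 = 1 then PX else 1)) *
                (if u₀ 0 + u₁ 0 = 1 then CNOT else 1)).mulVec (ket2 a b)))) =
      sign (dotp d u₀) •
        ((((if dotp d (fun i => u₀ i + u₁ i) = 1 then PZ else 1) ⊗ₖ
              (if u₀ 0 = 1 then PX else 1)) *
            (if u₀ 0 + u₁ 0 = 1 then CNOT else 1)).mulVec
          (∑ a : Bool, ∑ b : Bool, α (a, b) • ket2 a b)) := by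
  have hc := dotp_add d u₀ u₁
  set x := dotp d u₀ with hx
  set y := dotp d u₁ with hy
  set c := dotp d (fun i => u₀ i + u₁ i) with hcc
  set A := (if u₀ 0 = 1 then PX else 1) with hA
  set C := (if u₀ 0 + u₁ 0 = 1 then CNOT else 1) with hCdef
  have hC : ∀ a b : Bool, ∃ b' : Bool, C.mulVec (ket2 a b) = ket2 a b' := by
    intro a b
    rw [hCdef]
    split_ifs
    · exact ⟨xor b a, cnot_ket2 a b⟩
    · exact ⟨b, Matrix.one_mulVec _⟩
  have hmat : ∀ a b : Bool,
      (((if c = 1 then PZ else 1) ⊗ₖ A) * C).mulVec (ket2 a b) =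
        sign (if a then c else 0) •
          (((1 : Matrix Bool Bool ℂ) ⊗ₖ A) * C).mulVec (ket2 a b) := by
    intro a b
    obtain ⟨b', hb'⟩ := hC a b
    rw [← Matrix.mulVec_mulVec, ← Matrix.mulVec_mulVec, hb', key]
  have hsign : ∀ a : Bool,
      sign (dotp d (if a then u₁ else u₀)) = sign x * sign (if a then c else 0) := by
    intro a
    rcases zmod2_cases x with h1 | h1 <;> rcases zmod2_cases y with h2 | h2 <;>
      rcases a <;>
      simp [hc, ← hx, ← hy, h1, h2, sign, show (1 + 1 : ZMod 2) = 0 by decide]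
  have hlin : (((if c = 1 then PZ else 1) ⊗ₖ A) * C).mulVec
        (∑ a : Bool, ∑ b : Bool, α (a, b) • ket2 a b) =
      ∑ a : Bool, ∑ b : Bool,
        α (a, b) • (((if c = 1 then PZ else 1) ⊗ₖ A) * C).mulVec (ket2 a b) := by
    simp [Matrix.mulVec_add, Matrix.mulVec_smul, Fintype.sum_bool]
  rw [hlin, Finset.smul_sum]
  refine Finset.sum_congr rfl fun a _ => ?_
  rw [Finset.smul_sum]
  refine Finset.sum_congr rfl fun b _ => ?_
  rw [hmat a b, hsign a, smul_comm (α (a, b)), smul_smul, smul_smul, smul_smul]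
end
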